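/- arXiv:1508.05230 — 6 statements merged into one kernel-verified Lean document; each statement's English description precedes it below -/
import Mathlib

section
/- Let Γ be a fine grading by an abelian group on a Jordan pair V, realized over its universal group G. Then there exists a group homomorphism π : G → ℤ such that π(g) = 1 whenever V⁺_g ≠ 0 and π(g) = -1 whenever V⁻_g ≠ 0. In particular, the supports of Γ restricted to V⁺ and to V⁻ are disjoint. -/
/-- A (linear) Jordan pair over a field `F`. -/
structure JordanPair (F : Type) [Field F] (Vp Vm : Type)
    [AddCommGroup Vp] [Module F Vp] [AddCommGroup Vm] [Module F Vm] where
  Dp : Vp →ₗ[F] Vm →ₗ[F] Vp →ₗ[F] Vp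
  Dm : Vm →ₗ[F] Vp →ₗ[F] Vm →ₗ[F] Vm
  symm_p : ∀ x y z, Dp x y z = Dp z y x
  symm_m : ∀ x y z, Dm x y z = Dm z y x
  ljp2_p : ∀ x y u v z,
    Dp x y (Dp u v z) - Dp u v (Dp x y z) = Dp (Dp x y u) v z - Dp u (Dm y x v) z
  ljp2_m : ∀ x y u v z,
    Dm x y (Dm u v z) - Dm u v (Dm x y z) = Dm (Dm x y u) v z - Dm u (Dp y x v) z

/-- A grading of a Jordan pair by an abelian group `G`. -/
structure JPGrading {F : Type} [Field F] {Vp Vm : Type}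
    [AddCommGroup Vp] [Module F Vp] [AddCommGroup Vm] [Module F Vm]
    (G : Type) [AddCommGroup G] [DecidableEq G] (P : JordanPair F Vp Vm) where
  gp : G → Submodule F Vp
  gm : G → Submodule F Vm
  int_p : DirectSum.IsInternal gp
  int_m : DirectSum.IsInternal gm
  mul_p : ∀ g h k, ∀ x ∈ gp g, ∀ y ∈ gm h, ∀ z ∈ gp k, P.Dp x y z ∈ gp (g + h + k)
  mul_m : ∀ g h k, ∀ x ∈ gm g, ∀ y ∈ gp h, ∀ z ∈ gm k, P.Dm x y z ∈ gm (g + h + k)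

variable {F : Type} [Field F] {Vp Vm : Type}
    [AddCommGroup Vp] [Module F Vp] [AddCommGroup Vm] [Module F Vm]
    {P : JordanPair F Vp Vm}

/-- `Δ` is a refinement of `Γ`. -/
def JPGrading.Refines {H G : Type} [AddCommGroup H] [DecidableEq H]
    [AddCommGroup G] [DecidableEq G]
    (Δ : JPGrading H P) (Γ : JPGrading G P) : Prop :=
  ∀ h : H, ∃ g : G, Δ.gp h ≤ Γ.gp g ∧ Δ.gm h ≤ Γ.gm g

/-- A fine grading: any (abelian group) refinement of `Γ` has the same
homogeneous components, i.e. is in turn refined by `Γ`. -/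
def JPGrading.IsFine {G : Type} [AddCommGroup G] [DecidableEq G]
    (Γ : JPGrading G P) : Prop :=
  ∀ (H : Type) [AddCommGroup H] [DecidableEq H] (Δ : JPGrading H P),
    Δ.Refines Γ → Γ.Refines Δ

/-- Two gradings have the same homogeneous components. -/
def JPGrading.SameComponents {G H : Type} [AddCommGroup G] [DecidableEq G]
    [AddCommGroup H] [DecidableEq H]
    (Γ : JPGrading G P) (Δ : JPGrading H P) : Prop :=
  (∀ g, (Γ.gp g ≠ ⊥ ∨ Γ.gm g ≠ ⊥) → ∃ h, Δ.gp h = Γ.gp g ∧ Δ.gm h = Γ.gm g) ∧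
  (∀ h, (Δ.gp h ≠ ⊥ ∨ Δ.gm h ≠ ⊥) → ∃ g, Γ.gp g = Δ.gp h ∧ Γ.gm g = Δ.gm h)

/-- The universal property of the universal group of a grading: any realization
of the same decomposition as a grading by another abelian group is induced by a
unique group homomorphism which is the identity on the support. -/
def JPGrading.IsUniversal {G : Type} [AddCommGroup G] [DecidableEq G]
    (Γ : JPGrading G P) : Prop :=
  ∀ (H : Type) [AddCommGroup H] [DecidableEq H] (Δ : JPGrading H P),
    Γ.SameComponents Δ →
    ∃! φ : G →+ H, ∀ g, (Γ.gp g ≠ ⊥ ∨ Γ.gm g ≠ ⊥) →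
      Δ.gp (φ g) = Γ.gp g ∧ Δ.gm (φ g) = Γ.gm g

/-!
Put `V⁺` in degree `1` and `V⁻` in degree `-1` of an extra factor `ℤ`: this refines `Γ` to a
`G × ℤ`-grading. Since `Γ` is fine, every component of `Γ` lies in a single component of the
refinement, which lives in only one of `V⁺`, `V⁻`; so the supports on `V⁺` and `V⁻` are disjoint
and the refinement has the same components as `Γ`. The universal property of `G` then gives
`φ : G →+ G × ℤ` realizing it, and `π` is the second coordinate of `φ`.
-/

section ConcentrateAt

variable {ι κ α : Type*} [DecidableEq κ]

def concentrateAt [Bot α] (t : ι → α) (c : κ) (p : ι × κ) : α :=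
  if p.2 = c then t p.1 else ⊥

@[simp]
lemma concentrateAt_self [Bot α] (t : ι → α) (c : κ) (i : ι) :
    concentrateAt t c (i, c) = t i :=
  if_pos rfl

lemma concentrateAt_of_ne [Bot α] (t : ι → α) {c : κ} {p : ι × κ} (h : p.2 ≠ c) :
    concentrateAt t c p = ⊥ :=
  if_neg h

lemma eq_of_concentrateAt_ne_bot [Bot α] {t : ι → α} {c : κ} {p : ι × κ}
    (h : concentrateAt t c p ≠ ⊥) : p.2 = c :=
  not_not.mp fun hne => h (concentrateAt_of_ne t hne)

lemma concentrateAt_le [Preorder α] [OrderBot α] (t : ι → α) (c : κ) (p : ι × κ) :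
    concentrateAt t c p ≤ t p.1 := by
  unfold concentrateAt
  split_ifs <;> simp

variable [CompleteLattice α]

lemma iSupIndep.concentrateAt {t : ι → α} (ht : iSupIndep t) (c : κ) :
    iSupIndep (concentrateAt t c) := by
  rintro ⟨i, k⟩
  by_cases hk : k = c
  · subst hk
    rw [concentrateAt_self]
    refine (ht i).mono_right (iSup₂_le fun ⟨j, l⟩ hne => ?_)
    by_cases hl : l = k
    · subst hl
      rw [concentrateAt_self]
      exact le_iSup₂ (f := fun j (_ : j ≠ i) => t j) j fun hji => hne (by rw [hji])
    · exact (concentrateAt_of_ne t hl).le.trans bot_le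
  · simp [concentrateAt_of_ne t (p := (i, k)) hk]

lemma iSup_concentrateAt (t : ι → α) (c : κ) : ⨆ p, concentrateAt t c p = ⨆ i, t i :=
  le_antisymm
    (iSup_le fun p => (concentrateAt_le t c p).trans (le_iSup t p.1))
    (iSup_le fun i => (concentrateAt_self t c i).ge.trans (le_iSup _ (i, c)))

end ConcentrateAt

lemma DirectSum.IsInternal.concentrateAt {R M ι κ : Type*} [Ring R] [AddCommGroup M]
    [Module R M] [DecidableEq ι] [DecidableEq κ] {f : ι → Submodule R M}
    (hf : DirectSum.IsInternal f) (c : κ) : DirectSum.IsInternal (concentrateAt f c) := by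
  rw [DirectSum.isInternal_submodule_iff_iSupIndep_and_iSup_eq_top] at hf ⊢
  exact ⟨hf.1.concentrateAt c, (iSup_concentrateAt f c).trans hf.2⟩

lemma concentrateAt_trilinear_mem {R M N G κ : Type*} [CommRing R] [AddCommGroup M]
    [Module R M] [AddCommGroup N] [Module R N] [AddCommGroup G] [AddCommGroup κ] [DecidableEq κ]
    (D : M →ₗ[R] N →ₗ[R] M →ₗ[R] M) {f : G → Submodule R M} {f' : G → Submodule R N}
    (hD : ∀ g h k, ∀ x ∈ f g, ∀ y ∈ f' h, ∀ z ∈ f k, D x y z ∈ f (g + h + k))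
    {c d : κ} (hcd : c + d + c = c) :
    ∀ p q r, ∀ x ∈ concentrateAt f c p, ∀ y ∈ concentrateAt f' d q, ∀ z ∈ concentrateAt f c r,
      D x y z ∈ concentrateAt f c (p + q + r) := by
  rintro ⟨g, a⟩ ⟨h, b⟩ ⟨k, e⟩ x hx y hy z hz
  by_cases ha : a = c
  · by_cases hb : b = d
    · by_cases he : e = c
      · subst a b e
        have hdeg : (g, c) + (h, d) + (k, c) = (g + h + k, c) := Prod.ext rfl hcd
        rw [hdeg, concentrateAt_self]
        rw [concentrateAt_self] at hx hy hz
        exact hD g h k x hx y hy z hz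
      · rw [concentrateAt_of_ne f (p := (k, e)) he, Submodule.mem_bot] at hz
        simp [hz]
    · rw [concentrateAt_of_ne f' (p := (h, b)) hb, Submodule.mem_bot] at hy
      simp [hy]
  · rw [concentrateAt_of_ne f (p := (g, a)) ha, Submodule.mem_bot] at hx
    simp [hx]

namespace JPGrading

variable {G : Type} [AddCommGroup G] [DecidableEq G] (Γ : JPGrading G P)

def signRefinement : JPGrading (G × ℤ) P where
  gp := concentrateAt Γ.gp 1
  gm := concentrateAt Γ.gm (-1)
  int_p := Γ.int_p.concentrateAt 1
  int_m := Γ.int_m.concentrateAt (-1)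
  mul_p := concentrateAt_trilinear_mem P.Dp Γ.mul_p (by norm_num)
  mul_m := concentrateAt_trilinear_mem P.Dm Γ.mul_m (by norm_num)

lemma signRefinement_refines : Γ.signRefinement.Refines Γ :=
  fun p => ⟨p.1, concentrateAt_le Γ.gp 1 p, concentrateAt_le Γ.gm (-1) p⟩

lemma gp_eq_bot_or_gm_eq_bot_of_isFine (hfine : Γ.IsFine) (g : G) :
    Γ.gp g = ⊥ ∨ Γ.gm g = ⊥ := by
  by_contra! hboth
  obtain ⟨p, hp, hm⟩ := hfine _ _ Γ.signRefinement_refines g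
  have h1 : p.2 = 1 := eq_of_concentrateAt_ne_bot fun h => hboth.1 (le_bot_iff.mp (h ▸ hp))
  have h2 : p.2 = -1 := eq_of_concentrateAt_ne_bot fun h => hboth.2 (le_bot_iff.mp (h ▸ hm))
  omega

lemma sameComponents_signRefinement (hdisj : ∀ g, Γ.gp g = ⊥ ∨ Γ.gm g = ⊥) :
    Γ.SameComponents Γ.signRefinement := by
  refine ⟨fun g _ => ?_, fun ⟨g, n⟩ hsupp => ⟨g, ?_⟩⟩
  · rcases hdisj g with h | h
    · exact ⟨(g, -1), by simp [signRefinement, concentrateAt, h], by simp [signRefinement]⟩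
    · exact ⟨(g, 1), by simp [signRefinement], by simp [signRefinement, concentrateAt, h]⟩
  · rcases hsupp with h | h
    · obtain rfl : n = 1 := eq_of_concentrateAt_ne_bot h
      have hm := (hdisj g).resolve_left (by simpa [signRefinement] using h)
      simp [signRefinement, concentrateAt, hm]
    · obtain rfl : n = -1 := eq_of_concentrateAt_ne_bot h
      have hp := (hdisj g).resolve_right (by simpa [signRefinement] using h)
      simp [signRefinement, concentrateAt, hp]

end JPGrading

theorem stmt_3_general {G : Type} [AddCommGroup G] [DecidableEq G]
    (Γ : JPGrading G P) (hfine : Γ.IsFine)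
    (huniv : Γ.IsUniversal) :
    ∃ π : G →+ ℤ,
      (∀ g, Γ.gp g ≠ ⊥ → π g = 1) ∧
      (∀ g, Γ.gm g ≠ ⊥ → π g = -1) ∧
      (∀ g, Γ.gp g = ⊥ ∨ Γ.gm g = ⊥) := by
  have hdisj := Γ.gp_eq_bot_or_gm_eq_bot_of_isFine hfine
  obtain ⟨φ, hφ, -⟩ := huniv _ _ (Γ.sameComponents_signRefinement hdisj)
  refine ⟨(AddMonoidHom.snd G ℤ).comp φ, fun g hg => ?_, fun g hg => ?_, hdisj⟩
  · exact eq_of_concentrateAt_ne_bot ((hφ g (Or.inl hg)).1 ▸ hg)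
  · exact eq_of_concentrateAt_ne_bot ((hφ g (Or.inr hg)).2 ▸ hg)

/-- For a fine grading `Γ` on a Jordan pair realized over its universal group
`G`, there is a group homomorphism `π : G → ℤ` with `π(g) = 1` whenever
`V⁺_g ≠ 0` and `π(g) = -1` whenever `V⁻_g ≠ 0`; in particular the supports of
`Γ` on `V⁺` and `V⁻` are disjoint. -/
theorem stmt_3 {G : Type} [AddCommGroup G] [DecidableEq G]
    (Γ : JPGrading G P) (hfine : Γ.IsFine)
    (hgen : AddSubgroup.closure {g : G | Γ.gp g ≠ ⊥ ∨ Γ.gm g ≠ ⊥} = ⊤)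
    (huniv : Γ.IsUniversal) :
    ∃ π : G →+ ℤ,
      (∀ g, Γ.gp g ≠ ⊥ → π g = 1) ∧
      (∀ g, Γ.gm g ≠ ⊥ → π g = -1) ∧
      (∀ g, Γ.gp g = ⊥ ∨ Γ.gm g = ⊥) :=
  stmt_3_general Γ hfine huniv
end

section
/- Let V be a finite-dimensional semisimple Jordan pair over an algebraically closed field of characteristic not 2, with a G-grading Γ for an abelian group G. If g ∈ G is in the support of Γ on V^σ, then the subpair (V^σ_g, V^{-σ}_{-g}) is a semisimple Jordan pair. -/
open DirectSum

theorem decompose_apply_of_mem_shift {R M N ι : Type*} [Semiring R] [AddCommMonoid M]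
    [Module R M] [AddCommMonoid N] [Module R N] [AddLeftCancelMonoid ι] [DecidableEq ι]
    (A : ι → Submodule R M) (B : ι → Submodule R N) [Decomposition A] [Decomposition B]
    (f : N →ₗ[R] M) (c : ι) (hf : ∀ h, ∀ y ∈ B h, f y ∈ A (c + h)) (y : N) (h : ι) :
    (decompose A (f y) (c + h) : M) = f (decompose B y h) := by
  induction y using Decomposition.inductionOn B with
  | zero => simp
  | @homogeneous h' y =>
    rw [decompose_coe]
    by_cases hh : h' = h
    · subst hh
      rw [decompose_of_mem_same A (hf _ _ y.2), of_eq_same]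
    · rw [decompose_of_mem_ne A (hf _ _ y.2) ((add_right_injective c).ne hh),
        of_eq_of_ne _ _ _ (Ne.symm hh), ZeroMemClass.coe_zero, map_zero]
  | add y y' hy hy' => simp [hy, hy']

/-- Only the `(-g)`-component of `y` contributes to the degree-`g` part of `T x y x`. -/
theorem apply_decompose_neg_eq_smul_of_apply_eq_smul {R M N ι : Type*} [CommSemiring R]
    [AddCommMonoid M] [Module R M] [AddCommMonoid N] [Module R N] [AddCommGroup ι] [DecidableEq ι]
    (A : ι → Submodule R M) (B : ι → Submodule R N) [Decomposition A] [Decomposition B]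
    (T : M →ₗ[R] N →ₗ[R] M →ₗ[R] M)
    (hT : ∀ g h k, ∀ x ∈ A g, ∀ y ∈ B h, ∀ z ∈ A k, T x y z ∈ A (g + h + k))
    {g : ι} {x : M} (hx : x ∈ A g) {y : N} {a : R} (hy : T x y x = a • x) :
    T x (decompose B y (-g)) x = a • x := by
  have key := decompose_apply_of_mem_shift A B ((T x).flip x) (g + g)
    (fun h y' hy' => by simpa [add_right_comm] using hT g h g x hx y' hy' x hx) y (-g)
  rw [LinearMap.flip_apply, hy, add_neg_cancel_right,
    decompose_of_mem_same A (Submodule.smul_mem _ a hx)] at key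
  exact key.symm

theorem stmt_4_general (F : Type) [Field F]
    (Vp Vm : Type) [AddCommGroup Vp] [Module F Vp] [AddCommGroup Vm] [Module F Vm]
    (P : JordanPair F Vp Vm)
    (hssp : ∀ x : Vp, ∃ y : Vm, P.Dp x y x = (2 : F) • x)
    (hssm : ∀ y : Vm, ∃ x : Vp, P.Dm y x y = (2 : F) • y)
    (G : Type) [AddCommGroup G] [DecidableEq G]
    (Γ : JPGrading G P) (g : G) :
    (∀ x ∈ Γ.gp g, ∃ y ∈ Γ.gm (-g), P.Dp x y x = (2 : F) • x) ∧
    (∀ y ∈ Γ.gm (-g), ∃ x ∈ Γ.gp g, P.Dm y x y = (2 : F) • y) := by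
  let := Γ.int_p.chooseDecomposition
  let := Γ.int_m.chooseDecomposition
  constructor
  · intro x hx
    obtain ⟨y, hy⟩ := hssp x
    exact ⟨_, (decompose Γ.gm y (-g)).2,
      apply_decompose_neg_eq_smul_of_apply_eq_smul Γ.gp Γ.gm P.Dp Γ.mul_p hx hy⟩
  · intro y hy
    obtain ⟨x, hx⟩ := hssm y
    have hreg := apply_decompose_neg_eq_smul_of_apply_eq_smul Γ.gm Γ.gp P.Dm Γ.mul_m hy hx
    rw [neg_neg] at hreg
    exact ⟨_, (decompose Γ.gp x g).2, hreg⟩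

/-- Let `V` be a finite-dimensional semisimple Jordan pair over an algebraically
closed field of characteristic not 2 (for such pairs, semisimplicity is
equivalent to von Neumann regularity: `Q_x y = x`, i.e. `{x,y,x} = 2x`, has a
solution for every `x`).  If `g` lies in the support of a `G`-grading on `V^σ`,
then the subpair `(V^σ_g, V^{-σ}_{-g})` is semisimple (= von Neumann regular). -/
theorem stmt_4 (F : Type) [Field F] [IsAlgClosed F] (hchar : (2 : F) ≠ 0)
    (Vp Vm : Type) [AddCommGroup Vp] [Module F Vp] [AddCommGroup Vm] [Module F Vm]
    [FiniteDimensional F Vp] [FiniteDimensional F Vm]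
    (P : JordanPair F Vp Vm)
    (hssp : ∀ x : Vp, ∃ y : Vm, P.Dp x y x = (2 : F) • x)
    (hssm : ∀ y : Vm, ∃ x : Vp, P.Dm y x y = (2 : F) • y)
    (G : Type) [AddCommGroup G] [DecidableEq G]
    (Γ : JPGrading G P) (g : G)
    (hg : Γ.gp g ≠ ⊥ ∨ Γ.gm (-g) ≠ ⊥) :
    (∀ x ∈ Γ.gp g, ∃ y ∈ Γ.gm (-g), P.Dp x y x = (2 : F) • x) ∧
    (∀ y ∈ Γ.gm (-g), ∃ x ∈ Γ.gp g, P.Dm y x y = (2 : F) • y) :=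
  stmt_4_general F Vp Vm P hssp hssm G Γ g
end

section
/- Let V be a finite-dimensional simple Jordan pair over an algebraically closed field of characteristic not 2, graded by an abelian group G, and let t : V⁺ × V⁻ → F be the generic trace of V. Then t is homogeneous of degree 0: whenever t(V⁺_g, V⁻_h) ≠ 0 one has g + h = 0. -/
/-!
A `G`-grading of `V` is an action of the diagonalizable group scheme `Hom(G, 𝔾ₘ)` by
automorphisms. Its universal point lives over the group algebra `F[G]`: on `F[G] ⊗ V` it acts
by `1 ⊗ x ↦ e_g ⊗ x` for `x ∈ V_g`, and it respects the triple products because they add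
degrees. Invariance of the generic trace under this automorphism reads
`t(x, y) e_{g+h} = t(x, y) e_0` in `F[G]` for `x ∈ V⁺_g`, `y ∈ V⁻_h`, so `t(x, y) ≠ 0` forces
`g + h = 0`.
-/

open TensorProduct

def JordanPair.IsIdealPair {F : Type} [Field F] {Vp Vm : Type}
    [AddCommGroup Vp] [Module F Vp] [AddCommGroup Vm] [Module F Vm]
    (P : JordanPair F Vp Vm) (Ip : Submodule F Vp) (Im : Submodule F Vm) : Prop :=
  (∀ x y z, x ∈ Ip → P.Dp x y z ∈ Ip) ∧ (∀ x y z, y ∈ Im → P.Dp x y z ∈ Ip) ∧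
  (∀ x y z, x ∈ Im → P.Dm x y z ∈ Im) ∧ (∀ x y z, y ∈ Ip → P.Dm x y z ∈ Im)

def JordanPair.IsSimplePair {F : Type} [Field F] {Vp Vm : Type}
    [AddCommGroup Vp] [Module F Vp] [AddCommGroup Vm] [Module F Vm]
    (P : JordanPair F Vp Vm) : Prop :=
  P.Dp ≠ 0 ∧ P.Dm ≠ 0 ∧
  ∀ Ip Im, P.IsIdealPair Ip Im → (Ip = ⊥ ∧ Im = ⊥) ∨ (Ip = ⊤ ∧ Im = ⊤)


namespace LinearMap

section BaseChange

variable {F R M N P Q : Type*} [CommSemiring F] [CommSemiring R] [Algebra F R]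
  [AddCommMonoid M] [Module F M] [AddCommMonoid N] [Module F N]

noncomputable def liftBaseChange₂ [AddCommMonoid P] [Module F P] [Module R P]
    [IsScalarTower F R P] (B : M →ₗ[F] N →ₗ[F] P) : R ⊗[F] M →ₗ[R] R ⊗[F] N →ₗ[R] P :=
  ((liftBaseChangeEquiv R).toLinearMap.restrictScalars F ∘ₗ B).liftBaseChange R

@[simp]
theorem liftBaseChange₂_tmul [AddCommMonoid P] [Module F P] [Module R P]
    [IsScalarTower F R P] (B : M →ₗ[F] N →ₗ[F] P) (r s : R) (x : M) (y : N) :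
    liftBaseChange₂ B (r ⊗ₜ x) (s ⊗ₜ y) = (r * s) • B x y := by
  simp [liftBaseChange₂, mul_smul, smul_comm r s]

noncomputable def baseChange₃ [AddCommMonoid P] [Module F P] [AddCommMonoid Q] [Module F Q]
    (D : M →ₗ[F] N →ₗ[F] P →ₗ[F] Q) :
    R ⊗[F] M →ₗ[R] R ⊗[F] N →ₗ[R] R ⊗[F] P →ₗ[R] R ⊗[F] Q :=
  liftBaseChange₂ (D.compr₂ (baseChangeHom F R P Q))

theorem baseChange₃_tmul [AddCommMonoid P] [Module F P] [AddCommMonoid Q] [Module F Q]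
    (D : M →ₗ[F] N →ₗ[F] P →ₗ[F] Q) (r s u : R) (x : M) (y : N) (z : P) :
    baseChange₃ D (r ⊗ₜ x) (s ⊗ₜ y) (u ⊗ₜ z) = (r * s * u) ⊗ₜ D x y z := by
  simp [baseChange₃, smul_tmul', mul_comm]

noncomputable def baseChangeForm (t : M →ₗ[F] N →ₗ[F] F) : R ⊗[F] M →ₗ[R] R ⊗[F] N →ₗ[R] R :=
  liftBaseChange₂ (t.compr₂ (Algebra.linearMap F R))

theorem baseChangeForm_tmul (t : M →ₗ[F] N →ₗ[F] F) (r s : R) (x : M) (y : N) :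
    baseChangeForm t (r ⊗ₜ x) (s ⊗ₜ y) = r * s * algebraMap F R (t x y) := by
  simp [baseChangeForm]

theorem baseChange_ext_of_iSup_eq_top [AddCommMonoid P] [Module F P] [Module R P]
    [IsScalarTower F R P] {ι : Type*} {A : ι → Submodule F M} (hA : iSup A = ⊤)
    {f g : R ⊗[F] M →ₗ[R] P}
    (h : ∀ i, ∀ x ∈ A i, f (1 ⊗ₜ x) = g (1 ⊗ₜ x)) : f = g := by
  apply (liftBaseChangeEquiv R).symm.injective
  refine ext_on (s := ⋃ i, (A i : Set M)) (by rw [← Submodule.iSup_eq_span, hA]) ?_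
  rintro x ⟨_, ⟨i, rfl⟩, hx⟩
  exact h i x hx

end BaseChange

end LinearMap

namespace DirectSum.IsInternal

variable {F R M G : Type*} [CommSemiring F] [CommSemiring R] [Algebra F R]
  [AddCommMonoid M] [Module F M] [DecidableEq G] {A : G → Submodule F M} (hA : IsInternal A)

noncomputable def twist (c : G → R) : R ⊗[F] M →ₗ[R] R ⊗[F] M :=
  ((toModule F G (R ⊗[F] M) fun g => (TensorProduct.mk F R M (c g)).comp (A g).subtype) ∘ₗ
    (LinearEquiv.ofBijective (coeLinearMap A) hA).symm.toLinearMap).liftBaseChange R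

theorem twist_tmul (c : G → R) (r : R) {g : G} {x : M} (hx : x ∈ A g) :
    hA.twist c (r ⊗ₜ x) = (r * c g) ⊗ₜ x := by
  have hdecomp : (LinearEquiv.ofBijective (coeLinearMap A) hA).symm x = lof F G (A ·) g ⟨x, hx⟩ :=
    (LinearEquiv.symm_apply_eq _).2 (coeLinearMap_of A g ⟨x, hx⟩).symm
  simp [twist, hdecomp, smul_tmul']

theorem twist_comp_twist (c c' : G → R) : hA.twist c ∘ₗ hA.twist c' = hA.twist (c' * c) :=
  LinearMap.baseChange_ext_of_iSup_eq_top hA.submodule_iSup_eq_top fun g x hx => by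
    simp [hA.twist_tmul _ _ hx]

theorem twist_one : hA.twist (1 : G → R) = LinearMap.id :=
  LinearMap.baseChange_ext_of_iSup_eq_top hA.submodule_iSup_eq_top fun g x hx => by
    simp [hA.twist_tmul _ _ hx]

variable [AddCommGroup G]

noncomputable def twistEquiv (ψ : AddChar G R) : R ⊗[F] M ≃ₗ[R] R ⊗[F] M :=
  LinearEquiv.ofLinearMap (hA.twist ψ) (hA.twist ⇑ψ⁻¹)
    (by rw [twist_comp_twist, ← AddChar.coe_mul, inv_mul_cancel, AddChar.coe_one, twist_one])
    (by rw [twist_comp_twist, ← AddChar.coe_mul, mul_inv_cancel, AddChar.coe_one, twist_one])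

@[simp]
theorem twistEquiv_apply (ψ : AddChar G R) (a : R ⊗[F] M) : hA.twistEquiv ψ a = hA.twist ψ a :=
  rfl

variable {N P Q : Type*} [AddCommMonoid N] [Module F N] [AddCommMonoid P] [Module F P]
  [AddCommMonoid Q] [Module F Q] {B : G → Submodule F N} {C : G → Submodule F P}
  {E : G → Submodule F Q}

theorem twist_baseChange₃ (hB : IsInternal B) (hC : IsInternal C) (hE : IsInternal E)
    (D : M →ₗ[F] N →ₗ[F] P →ₗ[F] Q)
    (hD : ∀ g h k, ∀ x ∈ A g, ∀ y ∈ B h, ∀ z ∈ C k, D x y z ∈ E (g + h + k))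
    (ψ : AddChar G R) (a : R ⊗[F] M) (b : R ⊗[F] N) (c : R ⊗[F] P) :
    hE.twist ψ (D.baseChange₃ a b c)
      = D.baseChange₃ (hA.twist ψ a) (hB.twist ψ b) (hC.twist ψ c) := by
  have homogeneous_ab : ∀ g x, x ∈ A g → ∀ h y, y ∈ B h → ∀ c,
      hE.twist ψ (D.baseChange₃ (1 ⊗ₜ x) (1 ⊗ₜ y) c)
        = D.baseChange₃ (hA.twist ψ (1 ⊗ₜ x)) (hB.twist ψ (1 ⊗ₜ y)) (hC.twist ψ c) := by
    intro g x hx h y hy c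
    refine LinearMap.congr_fun (LinearMap.baseChange_ext_of_iSup_eq_top hC.submodule_iSup_eq_top
      (f := hE.twist ψ ∘ₗ D.baseChange₃ (1 ⊗ₜ x) (1 ⊗ₜ y))
      (g := D.baseChange₃ (hA.twist ψ (1 ⊗ₜ x)) (hB.twist ψ (1 ⊗ₜ y)) ∘ₗ hC.twist ψ)
      fun k z hz => ?_) c
    simp [LinearMap.baseChange₃_tmul, hA.twist_tmul _ _ hx, hB.twist_tmul _ _ hy,
      hC.twist_tmul _ _ hz, hE.twist_tmul _ _ (hD g h k x hx y hy z hz), AddChar.map_add_eq_mul]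
  have homogeneous_a : ∀ g x, x ∈ A g → ∀ b c,
      hE.twist ψ (D.baseChange₃ (1 ⊗ₜ x) b c)
        = D.baseChange₃ (hA.twist ψ (1 ⊗ₜ x)) (hB.twist ψ b) (hC.twist ψ c) := by
    intro g x hx b c
    exact LinearMap.congr_fun (LinearMap.baseChange_ext_of_iSup_eq_top hB.submodule_iSup_eq_top
      (f := hE.twist ψ ∘ₗ (D.baseChange₃ (1 ⊗ₜ x)).flip c)
      (g := (D.baseChange₃ (hA.twist ψ (1 ⊗ₜ x))).flip (hC.twist ψ c) ∘ₗ hB.twist ψ)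
      fun h y hy => homogeneous_ab g x hx h y hy c) b
  exact LinearMap.congr_fun (LinearMap.baseChange_ext_of_iSup_eq_top hA.submodule_iSup_eq_top
    (f := hE.twist ψ ∘ₗ (D.baseChange₃.flip b).flip c)
    (g := (D.baseChange₃.flip (hB.twist ψ b)).flip (hC.twist ψ c) ∘ₗ hA.twist ψ)
    fun g x hx => homogeneous_a g x hx b c) a

end DirectSum.IsInternal

/-- The generic trace is encoded through its characteristic property: invariance under all
`R`-point automorphisms of the pair, for every commutative `F`-algebra `R`. -/
theorem stmt_6_general (F : Type) [Field F]
    (Vp Vm : Type) [AddCommGroup Vp] [Module F Vp] [AddCommGroup Vm] [Module F Vm]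
    (P : JordanPair F Vp Vm)
    (t : Vp →ₗ[F] Vm →ₗ[F] F)
    (hinv : ∀ (R : Type) [CommRing R] [Algebra F R],
      ∀ (DpR : (R ⊗[F] Vp) →ₗ[R] (R ⊗[F] Vm) →ₗ[R] (R ⊗[F] Vp) →ₗ[R] (R ⊗[F] Vp))
        (DmR : (R ⊗[F] Vm) →ₗ[R] (R ⊗[F] Vp) →ₗ[R] (R ⊗[F] Vm) →ₗ[R] (R ⊗[F] Vm))
        (tR : (R ⊗[F] Vp) →ₗ[R] (R ⊗[F] Vm) →ₗ[R] R),
      (∀ (r s u : R) (x : Vp) (y : Vm) (z : Vp),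
          DpR (r ⊗ₜ[F] x) (s ⊗ₜ[F] y) (u ⊗ₜ[F] z) = (r * s * u) ⊗ₜ[F] P.Dp x y z) →
      (∀ (r s u : R) (x : Vm) (y : Vp) (z : Vm),
          DmR (r ⊗ₜ[F] x) (s ⊗ₜ[F] y) (u ⊗ₜ[F] z) = (r * s * u) ⊗ₜ[F] P.Dm x y z) →
      (∀ (r s : R) (x : Vp) (y : Vm),
          tR (r ⊗ₜ[F] x) (s ⊗ₜ[F] y) = r * s * algebraMap F R (t x y)) →
      ∀ (φp : (R ⊗[F] Vp) ≃ₗ[R] (R ⊗[F] Vp)) (φm : (R ⊗[F] Vm) ≃ₗ[R] (R ⊗[F] Vm)),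
        (∀ a b c, φp (DpR a b c) = DpR (φp a) (φm b) (φp c)) →
        (∀ a b c, φm (DmR a b c) = DmR (φm a) (φp b) (φm c)) →
        ∀ a b, tR (φp a) (φm b) = tR a b)
    (G : Type) [AddCommGroup G] [DecidableEq G] (Γ : JPGrading G P) :
    ∀ g h : G, (∃ x ∈ Γ.gp g, ∃ y ∈ Γ.gm h, t x y ≠ 0) → g + h = 0 := by
  intro g h ⟨x, hx, y, hy, hxy⟩
  let ψ : AddChar G (AddMonoidAlgebra F G) :=
    AddChar.toMonoidHomEquiv.symm (AddMonoidAlgebra.of F G)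
  have key := hinv (AddMonoidAlgebra F G) P.Dp.baseChange₃ P.Dm.baseChange₃ t.baseChangeForm
    (LinearMap.baseChange₃_tmul P.Dp) (LinearMap.baseChange₃_tmul P.Dm)
    (LinearMap.baseChangeForm_tmul t) (Γ.int_p.twistEquiv ψ) (Γ.int_m.twistEquiv ψ)
    (Γ.int_p.twist_baseChange₃ Γ.int_m Γ.int_p Γ.int_p P.Dp Γ.mul_p ψ)
    (Γ.int_m.twist_baseChange₃ Γ.int_p Γ.int_m Γ.int_m P.Dm Γ.mul_m ψ)
    (1 ⊗ₜ x) (1 ⊗ₜ y)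
  have hdeg : AddMonoidAlgebra.single (g + h) (t x y) = AddMonoidAlgebra.single 0 (t x y) := by
    simpa [ψ, Γ.int_p.twist_tmul _ _ hx, Γ.int_m.twist_tmul _ _ hy,
      LinearMap.baseChangeForm_tmul, AddMonoidAlgebra.single_mul_single] using key
  exact (AddMonoidAlgebra.single_left_inj hxy).mp hdeg

/-- The generic trace `t` of a finite-dimensional simple Jordan pair over an
algebraically closed field of characteristic not 2 is homogeneous with respect
to any grading by an abelian group: if `t(V⁺_g, V⁻_h) ≠ 0` then `g + h = 0`.
The generic trace is encoded here via its characteristic property used in the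
proof: invariance under all `R`-point automorphisms of the pair, for every
commutative unital `F`-algebra `R`. -/
theorem stmt_6 (F : Type) [Field F] [IsAlgClosed F] (hchar : (2 : F) ≠ 0)
    (Vp Vm : Type) [AddCommGroup Vp] [Module F Vp] [AddCommGroup Vm] [Module F Vm]
    [FiniteDimensional F Vp] [FiniteDimensional F Vm]
    (P : JordanPair F Vp Vm) (hsimple : P.IsSimplePair)
    (t : Vp →ₗ[F] Vm →ₗ[F] F)
    (hinv : ∀ (R : Type) [CommRing R] [Algebra F R],
      ∀ (DpR : (R ⊗[F] Vp) →ₗ[R] (R ⊗[F] Vm) →ₗ[R] (R ⊗[F] Vp) →ₗ[R] (R ⊗[F] Vp))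
        (DmR : (R ⊗[F] Vm) →ₗ[R] (R ⊗[F] Vp) →ₗ[R] (R ⊗[F] Vm) →ₗ[R] (R ⊗[F] Vm))
        (tR : (R ⊗[F] Vp) →ₗ[R] (R ⊗[F] Vm) →ₗ[R] R),
      (∀ (r s u : R) (x : Vp) (y : Vm) (z : Vp),
          DpR (r ⊗ₜ[F] x) (s ⊗ₜ[F] y) (u ⊗ₜ[F] z) = (r * s * u) ⊗ₜ[F] P.Dp x y z) →
      (∀ (r s u : R) (x : Vm) (y : Vp) (z : Vm),
          DmR (r ⊗ₜ[F] x) (s ⊗ₜ[F] y) (u ⊗ₜ[F] z) = (r * s * u) ⊗ₜ[F] P.Dm x y z) →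
      (∀ (r s : R) (x : Vp) (y : Vm),
          tR (r ⊗ₜ[F] x) (s ⊗ₜ[F] y) = r * s * algebraMap F R (t x y)) →
      ∀ (φp : (R ⊗[F] Vp) ≃ₗ[R] (R ⊗[F] Vp)) (φm : (R ⊗[F] Vm) ≃ₗ[R] (R ⊗[F] Vm)),
        (∀ a b c, φp (DpR a b c) = DpR (φp a) (φm b) (φp c)) →
        (∀ a b c, φm (DmR a b c) = DmR (φm a) (φp b) (φm c)) →
        ∀ a b, tR (φp a) (φm b) = tR a b)
    (G : Type) [AddCommGroup G] [DecidableEq G] (Γ : JPGrading G P) :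
    ∀ g h : G, (∃ x ∈ Γ.gp g, ∃ y ∈ Γ.gm h, t x y ≠ 0) → g + h = 0 :=
  stmt_6_general F Vp Vm P t hinv G Γ
end

section
/- Let J be a unital Jordan algebra over a field of characteristic not 2 with associated Jordan pair V = (J,J), and let Γ be a G-grading on V (G abelian) such that 1⁺ is a homogeneous element. Then deg(1⁺) + deg(1⁻) = 0, and the shift Γ^[g] with g = -deg(1⁺) satisfies deg_g(x⁺) = deg_g(x⁻) for all homogeneous x, and its restriction to J = V⁺ is a G-grading on the Jordan algebra J. -/
/-! Taking `x = z = 1` in the triple product gives `Q_{1⁺} y = y`, so `V⁻_k ⊆ V⁺_{k + 2e}` for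
every `k`. Since `V⁻` is exhausted by its components and the `V⁺_h` are independent, these
inclusions are equalities, which is the shift statement; `1 ∈ V⁺_e = V⁻_{-e}` follows. Finally
`{y, 1⁻, x} = xy`, which makes `V⁺` with degrees shifted by `-e` a graded algebra. -/

open Function

theorem iSupIndep.eq_of_le_comp {R M ι κ : Type*} [Ring R] [AddCommGroup M] [Module R M]
    {p : κ → Submodule R M} {q : ι → Submodule R M} (hp : iSupIndep p) (hq : iSup q = ⊤)
    {f : ι → κ} (hf : Injective f) (hle : ∀ i, q i ≤ p (f i)) (i : ι) : p (f i) = q i := by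
  refine le_antisymm (fun x hx => ?_) (hle i)
  have hx_split : x ∈ q i ⊔ ⨆ (j) (_ : j ≠ i), q j := by
    rw [← iSup_split_single, hq]
    exact Submodule.mem_top
  obtain ⟨a, ha, b, hb, rfl⟩ := Submodule.mem_sup.mp hx_split
  have hrest : ⨆ (j) (_ : j ≠ i), q j ≤ ⨆ (k) (_ : k ≠ f i), p k :=
    iSup₂_le fun j hj => (hle j).trans (le_iSup₂_of_le (f j) (hf.ne hj) le_rfl)
  have hb_diag : b ∈ p (f i) := (add_mem_cancel_left (hle i ha)).mp hx
  rw [Submodule.disjoint_def.mp (hp (f i)) b hb_diag (hrest hb), add_zero]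
  exact ha

theorem stmt_8_general (F : Type*) [Field F]
    (J : Type*) [NonAssocRing J] [Module F J]
    (G : Type*) [AddCommGroup G] [DecidableEq G]
    (gp gm : G → Submodule F J)
    (int_p : DirectSum.IsInternal gp) (int_m : DirectSum.IsInternal gm)
    (mul_p : ∀ g h k : G, ∀ x ∈ gp g, ∀ y ∈ gm h, ∀ z ∈ gp k,
      x * (y * z) + z * (x * y) - (x * z) * y ∈ gp (g + h + k))
    (e : G) (he : (1 : J) ∈ gp e) :
    (1 : J) ∈ gm (-e) ∧
    (∀ h : G, gp h = gm (h - (e + e))) ∧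
    (∀ k l : G, ∀ x ∈ gp (k + e), ∀ y ∈ gp (l + e), x * y ∈ gp (k + l + e)) := by
  have hQ : ∀ k, gm k ≤ gp (k + (e + e)) := fun k y hy => by
    have h := mul_p e k e 1 he y hy 1 he
    rwa [show e + k + e = k + (e + e) by abel, one_mul, mul_one, one_mul, mul_one,
      add_sub_cancel_right] at h
  have hshift : ∀ h, gp h = gm (h - (e + e)) := fun h => by
    simpa using int_p.submodule_iSupIndep.eq_of_le_comp int_m.submodule_iSup_eq_top
      (add_left_injective (e + e)) hQ (h - (e + e))
  have h1m : (1 : J) ∈ gm (-e) := by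
    rwa [hshift, show e - (e + e) = -e by abel] at he
  refine ⟨h1m, hshift, fun k l x hx y hy => ?_⟩
  have h := mul_p (l + e) (-e) (k + e) y hy 1 h1m x hx
  rwa [show l + e + -e + (k + e) = k + l + e by abel, one_mul, mul_one, mul_one,
    add_sub_cancel_left] at h

/-- Let `J` be a unital Jordan algebra over a field of characteristic not 2 and
`V = (J,J)` its associated Jordan pair, with trilinear products given (up to the
invertible factor 2) by `T x y z = x(yz) + z(xy) - (xz)y`.  If `Γ` is a
`G`-grading on `V` such that `1⁺` is homogeneous of degree `e`, then
`deg(1⁻) = -e` (so `deg 1⁺ + deg 1⁻ = 0`), the shift by `g = -e` satisfies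
`deg_g(x⁺) = deg_g(x⁻)` (i.e. `V⁺_h = V⁻_{h-2e}` for all `h`), and the shifted
grading restricts to a `G`-grading of the Jordan algebra `J = V⁺`. -/
theorem stmt_8 (F : Type*) [Field F] (hchar : (2 : F) ≠ 0)
    (J : Type*) [NonAssocRing J] [Module F J]
    (mul_comm' : ∀ a b : J, a * b = b * a)
    (jordan : ∀ a b : J, (a * b) * (a * a) = a * (b * (a * a)))
    (G : Type*) [AddCommGroup G] [DecidableEq G]
    (gp gm : G → Submodule F J)
    (int_p : DirectSum.IsInternal gp) (int_m : DirectSum.IsInternal gm)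
    (mul_p : ∀ g h k : G, ∀ x ∈ gp g, ∀ y ∈ gm h, ∀ z ∈ gp k,
      x * (y * z) + z * (x * y) - (x * z) * y ∈ gp (g + h + k))
    (mul_m : ∀ g h k : G, ∀ x ∈ gm g, ∀ y ∈ gp h, ∀ z ∈ gm k,
      x * (y * z) + z * (x * y) - (x * z) * y ∈ gm (g + h + k))
    (e : G) (he : (1 : J) ∈ gp e) :
    (1 : J) ∈ gm (-e) ∧
    (∀ h : G, gp h = gm (h - (e + e))) ∧
    (∀ k l : G, ∀ x ∈ gp (k + e), ∀ y ∈ gp (l + e), x * y ∈ gp (k + l + e)) :=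
  stmt_8_general F J G gp gm int_p int_m mul_p e he
end

section
/- Let C be the split Cayley (octonion) algebra over a field F of characteristic not 2, with norm n, and let B = C ⊕ C be the bi-Cayley Jordan pair with quadratic product Q_x(y) = (x₁ȳ₁x₁ + x̄₂(y₂x₁), x₂ȳ₂x₂ + (x₂y₁)x̄₁). Then the map φ = (φ⁺, φ⁻) given by φ⁺(x₁,x₂) = (x̄₂, x₁) and φ⁻(y₁,y₂) = (y₂, ȳ₁) is an isomorphism from the bi-Cayley pair onto the rectangular matrix Jordan pair M₁ₓ₂(C) with products Q⁺_x(y) = x(yx) and Q⁻_y(x) = (yx)y. -/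
/-!
Polarising the multiplicativity `n (x * y) = n x * n y` of the norm gives identities for the
polar form `⟨·,·⟩` such as `⟨x * y, z * y⟩ = ⟨x, z⟩ n(y)`; since `⟨·,·⟩` is nondegenerate, they
yield `x̄ (x y) = n(x) y = (y x) x̄`. Consequently every element satisfies
`x² = ⟨x, 1⟩ x - n(x) 1`, the conjugation `x ↦ x̄` is an involutive anti-automorphism, and `C` is
flexible: `(x z) x = x (z x)`. Conjugating one coordinate of `Q_x y` and using these three facts
turns it into the matching coordinate of `x (y x)`, resp. `(y x) y`, in `M₁ₓ₂(C)`; the remaining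
coordinates agree up to the order of the summands.
-/

/-- The standard involution of a composition algebra:
`x̄ = n(x,1)·1 - x`, where `n(·,·)` is the polar form of the norm `n`. -/
def ocConj (F : Type) [Field F] (C : Type) [NonAssocRing C] [Module F C]
    (n : QuadraticForm F C) (x : C) : C :=
  QuadraticMap.polar n x 1 • (1 : C) - x

/-- The quadratic operator of the bi-Cayley Jordan pair / triple system on
`B = C ⊕ C`:
`Q_x(y) = (x₁ȳ₁x₁ + x̄₂(y₂x₁), x₂ȳ₂x₂ + (x₂y₁)x̄₁)`. -/
def biQ (F : Type) [Field F] (C : Type) [NonAssocRing C] [Module F C]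
    (n : QuadraticForm F C) (x y : C × C) : C × C :=
  ((x.1 * ocConj F C n y.1) * x.1 + ocConj F C n x.2 * (y.2 * x.1),
   (x.2 * ocConj F C n y.2) * x.2 + (x.2 * y.1) * ocConj F C n x.1)


/-- The quadratic operator `Q⁺_x(y) = x(yx)` of the rectangular matrix Jordan
pair `M₁ₓ₂(C)`, written out in coordinates in `C`. -/
def m12Qp (C : Type) [NonAssocRing C] (x y : C × C) : C × C :=
  ((x.1 * y.1) * x.1 + x.2 * (y.2 * x.1), x.1 * (y.1 * x.2) + (x.2 * y.2) * x.2)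

/-- The quadratic operator `Q⁻_y(x) = (yx)y` of the rectangular matrix Jordan
pair `M₁ₓ₂(C)`, written out in coordinates in `C`. -/
def m12Qm (C : Type) [NonAssocRing C] (y x : C × C) : C × C :=
  ((y.1 * x.1) * y.1 + (y.1 * x.2) * y.2, (y.2 * x.1) * y.1 + (y.2 * x.2) * y.2)

open QuadraticMap

namespace CompositionAlgebra

section CompositionNorm

variable {R C : Type} [CommRing R] [NonAssocRing C] [Module R C] {n : QuadraticForm R C}
  (hcomp : ∀ x y : C, n (x * y) = n x * n y)
include hcomp

theorem polar_mul_mul_same_right (x z y : C) : polar n (x * y) (z * y) = polar n x z * n y := by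
  have h := hcomp (x + z) y
  rw [add_mul, QuadraticMap.map_add ⇑n, QuadraticMap.map_add ⇑n, hcomp, hcomp] at h
  linear_combination h

theorem polar_mul_mul_same_left (x y w : C) : polar n (x * y) (x * w) = n x * polar n y w := by
  have h := hcomp x (y + w)
  rw [mul_add, QuadraticMap.map_add ⇑n, QuadraticMap.map_add ⇑n, hcomp, hcomp] at h
  linear_combination h

theorem polar_mul_add_polar_mul (x y z w : C) :
    polar n (x * y) (z * w) + polar n (x * w) (z * y) = polar n x z * polar n y w := by
  have h := polar_mul_mul_same_right hcomp x z (y + w)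
  rw [mul_add, mul_add, polar_add_left, polar_add_right, polar_add_right,
    polar_mul_mul_same_right hcomp, polar_mul_mul_same_right hcomp, QuadraticMap.map_add ⇑n] at h
  linear_combination h

theorem polar_mul_left_eq (x u z : C) :
    polar n (x * u) z = polar n x 1 * polar n u z - polar n (x * z) u := by
  have h := polar_mul_add_polar_mul hcomp x u 1 z
  rw [one_mul, one_mul] at h
  linear_combination h

theorem polar_mul_right_eq (x u z : C) :
    polar n (u * x) z = polar n x 1 * polar n u z - polar n u (z * x) := by
  have h := polar_mul_add_polar_mul hcomp u 1 z x
  rw [mul_one, mul_one, polar_comm n 1] at h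
  linear_combination h

theorem polar_mul_one (x y : C) :
    polar n (x * y) 1 = polar n x 1 * polar n y 1 - polar n x y := by
  have h := polar_mul_right_eq hcomp y x 1
  rw [one_mul] at h
  linear_combination h

end CompositionNorm

section Nondegenerate

variable {R C : Type} [CommRing R] [AddCommGroup C] [Module R C] {n : QuadraticForm R C}
  (hnd : ∀ x : C, (∀ y : C, polar n x y = 0) → x = 0)
include hnd

theorem eq_of_polar_eq {a b : C} (h : ∀ z : C, polar n a z = polar n b z) : a = b :=
  sub_eq_zero.mp <| hnd (a - b) fun z => by rw [polar_sub_left, h z, sub_self]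

end Nondegenerate

-- `n 1 = 1` unless `C = 0`; stated so that no nontriviality is needed.
theorem norm_one_sub_one_smul_one {R C : Type} [CommRing R] [NonAssocRing C] [Module R C]
    {n : QuadraticForm R C} (hcomp : ∀ x y : C, n (x * y) = n x * n y)
    (hnd : ∀ x : C, (∀ y : C, polar n x y = 0) → x = 0) : (n 1 - 1) • (1 : C) = 0 := by
  refine eq_of_polar_eq hnd fun z => ?_
  have h := polar_mul_mul_same_right hcomp 1 z 1
  rw [mul_one, mul_one] at h
  rw [polar_smul_left, polar_zero_left, smul_eq_mul]
  linear_combination -h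

section Conjugation

variable {F C : Type} [Field F] [NonAssocRing C] [Module F C] {n : QuadraticForm F C}

theorem ocConj_add (a b : C) : ocConj F C n (a + b) = ocConj F C n a + ocConj F C n b := by
  simp only [ocConj, polar_add_left, add_smul]
  abel

variable (hcomp : ∀ x y : C, n (x * y) = n x * n y)
  (hnd : ∀ x : C, (∀ y : C, polar n x y = 0) → x = 0)
include hcomp hnd

theorem ocConj_ocConj (x : C) : ocConj F C n (ocConj F C n x) = x := by
  have h := norm_one_sub_one_smul_one hcomp hnd
  simp only [ocConj, polar_sub_left, polar_smul_left, polar_self, smul_eq_mul, nsmul_eq_mul]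
  linear_combination (norm := module) (2 * polar n x 1) • h

theorem ocConj_mul_mul [IsScalarTower F C C] (x y : C) : ocConj F C n x * (x * y) = n x • y := by
  refine eq_of_polar_eq hnd fun z => ?_
  rw [ocConj, sub_mul, smul_mul_assoc, one_mul, polar_sub_left, polar_smul_left, polar_smul_left,
    polar_mul_left_eq hcomp x (x * y) z, polar_mul_mul_same_left hcomp x z y, polar_comm n z y]
  simp only [smul_eq_mul]
  ring

theorem mul_mul_ocConj [SMulCommClass F C C] (x y : C) : y * x * ocConj F C n x = n x • y := by
  refine eq_of_polar_eq hnd fun z => ?_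
  rw [ocConj, mul_sub, mul_smul_comm, mul_one, polar_sub_left, polar_smul_left, polar_smul_left,
    polar_mul_right_eq hcomp x (y * x) z, polar_mul_mul_same_right hcomp y z x]
  simp only [smul_eq_mul]
  ring

theorem mul_mul_left_eq [IsScalarTower F C C] (x y : C) :
    x * (x * y) = polar n x 1 • (x * y) - n x • y := by
  have h := ocConj_mul_mul hcomp hnd x y
  rw [ocConj, sub_mul, smul_mul_assoc, one_mul] at h
  linear_combination (norm := module) -h

theorem mul_mul_right_eq [SMulCommClass F C C] (x y : C) :
    y * x * x = polar n x 1 • (y * x) - n x • y := by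
  have h := mul_mul_ocConj hcomp hnd x y
  rw [ocConj, mul_sub, mul_smul_comm, mul_one] at h
  linear_combination (norm := module) -h

theorem mul_self_eq [IsScalarTower F C C] (x : C) : x * x = polar n x 1 • x - n x • (1 : C) := by
  simpa only [mul_one] using mul_mul_left_eq hcomp hnd x 1

theorem mul_add_mul_comm_eq [IsScalarTower F C C] (x y : C) :
    x * y + y * x = polar n x 1 • y + polar n y 1 • x - polar n x y • (1 : C) := by
  have h := mul_self_eq hcomp hnd (x + y)
  rw [add_mul, mul_add, mul_add, mul_self_eq hcomp hnd x, mul_self_eq hcomp hnd y,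
    polar_add_left, QuadraticMap.map_add ⇑n] at h
  linear_combination (norm := module) h

theorem ocConj_mul [SMulCommClass F C C] [IsScalarTower F C C] (x y : C) :
    ocConj F C n (x * y) = ocConj F C n y * ocConj F C n x := by
  have h := mul_add_mul_comm_eq hcomp hnd x y
  simp only [ocConj, polar_mul_one hcomp, sub_mul, mul_sub, smul_mul_assoc, mul_smul_comm,
    one_mul, mul_one]
  linear_combination (norm := module) -h

theorem flexible [SMulCommClass F C C] [IsScalarTower F C C] (x z : C) :
    x * z * x = x * (z * x) := by
  have h := mul_add_mul_comm_eq hcomp hnd x z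
  have hr := congrArg (· * x) h
  have hl := congrArg (x * ·) h
  simp only [add_mul, sub_mul, mul_add, mul_sub, smul_mul_assoc, mul_smul_comm, one_mul,
    mul_one] at hr hl
  linear_combination (norm := module) hr - hl - mul_mul_right_eq hcomp hnd x z +
    mul_mul_left_eq hcomp hnd x z

end Conjugation

end CompositionAlgebra

theorem stmt_9_general (F : Type) [Field F]
    (C : Type) [NonAssocRing C] [Module F C] [SMulCommClass F C C] [IsScalarTower F C C]
    (n : QuadraticForm F C)
    (hcomp : ∀ x y : C, n (x * y) = n x * n y)
    (hnd : ∀ x : C, (∀ y : C, QuadraticMap.polar n x y = 0) → x = 0) :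
    ∀ φp φm : C × C → C × C,
      (∀ x : C × C, φp x = (ocConj F C n x.2, x.1)) →
      (∀ y : C × C, φm y = (y.2, ocConj F C n y.1)) →
      Function.Bijective φp ∧ Function.Bijective φm ∧
      (∀ x y : C × C, φp (biQ F C n x y) = m12Qp C (φp x) (φm y)) ∧
      (∀ y x : C × C, φm (biQ F C n y x) = m12Qm C (φm y) (φp x)) := by
  intro φp φm hp hm
  obtain rfl : φp = fun x => (ocConj F C n x.2, x.1) := funext hp
  obtain rfl : φm = fun y => (y.2, ocConj F C n y.1) := funext hm
  have invol : Function.Involutive (ocConj F C n) := CompositionAlgebra.ocConj_ocConj hcomp hnd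
  refine ⟨(invol.bijective.prodMap Function.bijective_id).comp Prod.swap_bijective,
    (Function.bijective_id.prodMap invol.bijective).comp Prod.swap_bijective,
    fun x y => ?_, fun y x => ?_⟩ <;>
  ext <;>
  simp only [biQ, m12Qp, m12Qm, CompositionAlgebra.ocConj_add,
    CompositionAlgebra.ocConj_mul hcomp hnd, CompositionAlgebra.ocConj_ocConj hcomp hnd,
    CompositionAlgebra.flexible hcomp hnd, add_comm]

/-- For the split Cayley algebra `C` over a field of characteristic not 2, the
pair of maps `φ⁺(x₁,x₂) = (x̄₂, x₁)`, `φ⁻(y₁,y₂) = (y₂, ȳ₁)` is an isomorphism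
from the bi-Cayley Jordan pair `V_B = (C⊕C, C⊕C)` onto the rectangular matrix
Jordan pair `M₁ₓ₂(C)`. -/
theorem stmt_9 (F : Type) [Field F] (hchar : (2 : F) ≠ 0)
    (C : Type) [NonAssocRing C] [Module F C] [SMulCommClass F C C] [IsScalarTower F C C]
    (n : QuadraticForm F C)
    (hcomp : ∀ x y : C, n (x * y) = n x * n y)
    (hnd : ∀ x : C, (∀ y : C, QuadraticMap.polar n x y = 0) → x = 0)
    (hdim : Module.finrank F C = 8)
    (hsplit : ∃ x : C, x ≠ 0 ∧ n x = 0) :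
    ∀ φp φm : C × C → C × C,
      (∀ x : C × C, φp x = (ocConj F C n x.2, x.1)) →
      (∀ y : C × C, φm y = (y.2, ocConj F C n y.1)) →
      Function.Bijective φp ∧ Function.Bijective φm ∧
      (∀ x y : C × C, φp (biQ F C n x y) = m12Qp C (φp x) (φm y)) ∧
      (∀ y x : C × C, φm (biQ F C n y x) = m12Qm C (φm y) (φp x)) :=
  stmt_9_general F C n hcomp hnd
end

section
/- Let C be a Cayley algebra over a field of characteristic not 2 and V_B the bi-Cayley Jordan pair on B = C ⊕ C. For each a ∈ C, the pair of maps φ_a⁺(x₁,x₂) = (x₁ - x̄₂a, x₂) and φ_a⁻(y₁,y₂) = (y₁, aȳ₁ + y₂) is an automorphism of V_B, and φ_a ∘ φ_b = φ_{a+b} for all a, b ∈ C, so {φ_a : a ∈ C} is an abelian subgroup of Aut(V_B) isomorphic to the additive group (C,+). -/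
/-!
A composition algebra is alternative: `x̄ (x y) = n(x) y` together with `x̄ = n(x,1) - x`
gives `(x x) y = x (x y)`. An associator `A = [x, y, z]` is trace-free and orthogonal to `x`,
hence `A x = x̄ A`; with alternativity this yields the Moufang identities. Since `x ↦ x̄` reverses
products, each component of `φ_a⁺ (Q_x y) = Q_{φ_a⁺ x} (φ_a⁻ y)` and of its mirror image splits,
by degree in `a`, `x` and `y`, into Moufang identities, their linearisations, and the associator
identities `[u, ac, ua] = -[u, a, c] (ua)` and `[ac, ua, c] = -(ac) [u, a, c]`. The maps are
additive in `a` because the product is bilinear, and `φ_a⁻ (1, 0) = (1, a)`.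
-/

open QuadraticMap

structure IsCompositionNorm {F C : Type} [Field F] [NonAssocRing C] [Module F C]
    (n : QuadraticForm F C) : Prop where
  map_mul : ∀ x y : C, n (x * y) = n x * n y
  polar_nondegenerate : ∀ x : C, (∀ y : C, polar n x y = 0) → x = 0
  map_one : n 1 = 1

lemma IsCompositionNorm.of_nontrivial {F C : Type} [Field F] [NonAssocRing C] [Module F C]
    [Nontrivial C] {n : QuadraticForm F C} (hmul : ∀ x y : C, n (x * y) = n x * n y)
    (hnd : ∀ x : C, (∀ y : C, polar n x y = 0) → x = 0) : IsCompositionNorm n where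
  map_mul := hmul
  polar_nondegenerate := hnd
  map_one := by
    have h := hmul 1 1
    rw [mul_one] at h
    have h0 : n 1 ≠ 0 := fun h0 => one_ne_zero <| hnd 1 fun y => by
      have hy : ∀ x : C, n x = 0 := fun x => by rw [← mul_one x, hmul, h0, mul_zero]
      rw [polar, hy, hy, hy, sub_zero, sub_zero]
    exact mul_left_cancel₀ h0 (by rw [mul_one, ← h])

section Polar

variable {F : Type} [Field F] {C : Type} [NonAssocRing C] [Module F C] {n : QuadraticForm F C}

lemma map_add_eq_add_polar (x y : C) : n (x + y) = n x + n y + polar n x y := by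
  rw [polar]; ring

lemma polar_one_one (h1 : n 1 = 1) : polar n (1 : C) 1 = 2 := by
  rw [polar_self, h1, nsmul_eq_mul, Nat.cast_ofNat, mul_one]

variable (hmul : ∀ x y : C, n (x * y) = n x * n y)
include hmul

lemma polar_mul_mul_left (x y z : C) : polar n (x * y) (x * z) = n x * polar n y z := by
  simp only [polar, ← mul_add, hmul]; ring

lemma polar_mul_mul_right (x y z : C) : polar n (x * z) (y * z) = polar n x y * n z := by
  simp only [polar, ← add_mul, hmul]; ring

lemma polar_mul_mul_add_polar_mul_mul (x y w z : C) :
    polar n (x * y) (w * z) + polar n (w * y) (x * z) = polar n x w * polar n y z := by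
  have h := polar_mul_mul_left hmul (x + w) y z
  rw [add_mul, add_mul, polar_add_left, polar_add_right, polar_add_right,
    polar_mul_mul_left hmul, polar_mul_mul_left hmul, map_add_eq_add_polar] at h
  linear_combination h

end Polar

section Conj

variable {F : Type} [Field F] {C : Type} [NonAssocRing C] [Module F C] {n : QuadraticForm F C}

lemma ocConj_add (x y : C) : ocConj F C n (x + y) = ocConj F C n x + ocConj F C n y := by
  simp only [ocConj, polar_add_left, add_smul]; abel

lemma ocConj_sub (x y : C) : ocConj F C n (x - y) = ocConj F C n x - ocConj F C n y := by
  simp only [ocConj, polar_sub_left, sub_smul]; abel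

lemma polar_ocConj_left (x y : C) :
    polar n (ocConj F C n x) y = polar n x (ocConj F C n y) := by
  simp only [ocConj, polar_sub_left, polar_sub_right, polar_smul_left, polar_smul_right,
    smul_eq_mul, polar_comm n 1 y, polar_comm n x 1]
  ring

variable (h1 : n 1 = 1)
include h1

lemma ocConj_one : ocConj F C n 1 = 1 := by
  rw [ocConj, polar_one_one h1, two_smul, add_sub_cancel_right]

lemma polar_ocConj_one (x : C) : polar n (ocConj F C n x) 1 = polar n x 1 := by
  rw [polar_ocConj_left, ocConj_one h1]

lemma ocConj_ocConj (x : C) : ocConj F C n (ocConj F C n x) = x := by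
  rw [ocConj, polar_ocConj_one h1, ocConj, sub_sub_cancel]

lemma map_ocConj (x : C) : n (ocConj F C n x) = n x := by
  rw [ocConj, sub_eq_add_neg, map_add_eq_add_polar, QuadraticMap.map_neg, QuadraticMap.map_smul,
    polar_neg_right, polar_smul_left, h1, polar_comm n 1 x, smul_eq_mul]
  ring

end Conj

section Composition

variable {F : Type} [Field F] {C : Type} [NonAssocRing C] [Module F C] {n : QuadraticForm F C}

lemma ocConj_mul_eq_smul_sub [IsScalarTower F C C] (x y : C) :
    ocConj F C n x * y = polar n x 1 • y - x * y := by
  rw [ocConj, sub_mul, smul_mul_assoc, one_mul]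

lemma mul_ocConj_eq_smul_sub [SMulCommClass F C C] (x y : C) :
    y * ocConj F C n x = polar n x 1 • y - y * x := by
  rw [ocConj, mul_sub, mul_smul_comm, mul_one]

lemma associator_ocConj_left [IsScalarTower F C C] (x y z : C) :
    associator (ocConj F C n x) y z = -associator x y z := by
  simp only [associator_apply, ocConj_mul_eq_smul_sub, sub_mul, smul_mul_assoc]
  abel

lemma associator_ocConj_right [SMulCommClass F C C] (x y z : C) :
    associator x y (ocConj F C n z) = -associator x y z := by
  simp only [associator_apply, mul_ocConj_eq_smul_sub, mul_sub, mul_smul_comm]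
  abel

section Multiplicative

variable (hmul : ∀ x y : C, n (x * y) = n x * n y)
include hmul

lemma polar_mul_eq_polar_ocConj_mul [IsScalarTower F C C] (x y z : C) :
    polar n (x * y) z = polar n y (ocConj F C n x * z) := by
  have h := polar_mul_mul_add_polar_mul_mul hmul x y 1 z
  rw [one_mul, one_mul] at h
  rw [ocConj_mul_eq_smul_sub, polar_sub_right, polar_smul_right, smul_eq_mul]
  linear_combination h

lemma polar_mul_eq_polar_mul_ocConj [SMulCommClass F C C] (x y z : C) :
    polar n (x * y) z = polar n x (z * ocConj F C n y) := by
  have h := polar_mul_mul_add_polar_mul_mul hmul x y z 1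
  rw [mul_one, mul_one, polar_comm n (z * y)] at h
  rw [mul_ocConj_eq_smul_sub, polar_sub_right, polar_smul_right, smul_eq_mul]
  linear_combination h

end Multiplicative

namespace IsCompositionNorm

variable (hn : IsCompositionNorm n)
include hn

lemma eq_of_polar_eq {x y : C} (h : ∀ z, polar n x z = polar n y z) : x = y :=
  sub_eq_zero.mp <| hn.polar_nondegenerate _ fun z => by rw [polar_sub_left, h z, sub_self]

lemma ocConj_mul_mul_left [IsScalarTower F C C] (x y : C) :
    ocConj F C n x * (x * y) = n x • y :=
  hn.eq_of_polar_eq fun z => by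
    rw [polar_mul_eq_polar_ocConj_mul hn.map_mul, ocConj_ocConj hn.map_one,
      polar_mul_mul_left hn.map_mul, polar_smul_left, smul_eq_mul]

lemma mul_mul_ocConj_right [SMulCommClass F C C] (x y : C) :
    y * x * ocConj F C n x = n x • y :=
  hn.eq_of_polar_eq fun z => by
    rw [polar_mul_eq_polar_mul_ocConj hn.map_mul, ocConj_ocConj hn.map_one,
      polar_mul_mul_right hn.map_mul, polar_smul_left, smul_eq_mul, polar_comm n y z, mul_comm]

lemma mul_ocConj_mul_right [SMulCommClass F C C] (x y : C) :
    y * ocConj F C n x * x = n x • y := by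
  simpa only [ocConj_ocConj hn.map_one, map_ocConj hn.map_one]
    using hn.mul_mul_ocConj_right (ocConj F C n x) y

lemma mul_ocConj_self [SMulCommClass F C C] (x : C) : x * ocConj F C n x = n x • (1 : C) := by
  simpa only [one_mul] using hn.mul_mul_ocConj_right x 1

lemma ocConj_mul_self [IsScalarTower F C C] (x : C) : ocConj F C n x * x = n x • (1 : C) := by
  simpa only [mul_one] using hn.ocConj_mul_mul_left x 1

lemma mul_self_eq [SMulCommClass F C C] (x : C) : x * x = polar n x 1 • x - n x • (1 : C) := by
  rw [← hn.mul_ocConj_self, mul_ocConj_eq_smul_sub, sub_sub_cancel]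

lemma mul_add_mul_swap [SMulCommClass F C C] (x y : C) :
    x * y + y * x = polar n x 1 • y + polar n y 1 • x - polar n x y • (1 : C) := by
  have h := hn.mul_self_eq (x + y)
  rw [add_mul, mul_add, mul_add, hn.mul_self_eq x, hn.mul_self_eq y, polar_add_left,
    map_add_eq_add_polar] at h
  linear_combination (norm := module) h

lemma polar_mul_one [SMulCommClass F C C] (x y : C) :
    polar n (x * y) 1 = polar n x (ocConj F C n y) := by
  rw [polar_mul_eq_polar_mul_ocConj hn.map_mul, one_mul]

lemma ocConj_mul [SMulCommClass F C C] [IsScalarTower F C C] (x y : C) :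
    ocConj F C n (x * y) = ocConj F C n y * ocConj F C n x := by
  have ht : polar n (x * y) 1 = polar n y 1 * polar n x 1 - polar n x y := by
    rw [hn.polar_mul_one, ocConj, polar_sub_right, polar_smul_right, smul_eq_mul]
  have h := hn.mul_add_mul_swap x y
  rw [ocConj, ht, ocConj_mul_eq_smul_sub, mul_ocConj_eq_smul_sub, ocConj]
  linear_combination (norm := module) -h

lemma mul_eq_mul_ocConj_of_polar_eq_zero [SMulCommClass F C C] {x a : C} (hx : polar n x a = 0)
    (ha : polar n a 1 = 0) : x * a = a * ocConj F C n x := by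
  have h := hn.mul_add_mul_swap x a
  rw [hx, ha, zero_smul, zero_smul, add_zero, sub_zero] at h
  rw [mul_ocConj_eq_smul_sub]
  linear_combination (norm := abel1) h

lemma associator_mul_self_right [SMulCommClass F C C] (x y z : C) :
    associator x y (z * z) = polar n z 1 • associator x y z := by
  simp only [associator_apply, hn.mul_self_eq z, mul_sub, mul_smul_comm, mul_one, smul_sub]
  abel

end IsCompositionNorm

end Composition

structure IsAlternative (A : Type*) [NonUnitalNonAssocRing A] : Prop where
  associator_self_left : ∀ x y : A, associator x x y = 0
  associator_self_right : ∀ x y : A, associator x y y = 0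

namespace IsAlternative

variable {A : Type*} [NonUnitalNonAssocRing A] (hA : IsAlternative A)
include hA

lemma associator_swap_left (x y z : A) : associator x y z = -associator y x z := by
  have h := hA.associator_self_left (x + y) z
  have hx := hA.associator_self_left x z
  have hy := hA.associator_self_left y z
  simp only [associator_apply, add_mul, mul_add] at h hx hy ⊢
  linear_combination (norm := abel1) h - hx - hy

lemma associator_swap_right (x y z : A) : associator x y z = -associator x z y := by
  have h := hA.associator_self_right x (y + z)
  have hy := hA.associator_self_right x y
  have hz := hA.associator_self_right x z
  simp only [associator_apply, add_mul, mul_add] at h hy hz ⊢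
  linear_combination (norm := abel1) h - hy - hz

lemma associator_cyclic (x y z : A) : associator x y z = associator y z x := by
  rw [hA.associator_swap_left, hA.associator_swap_right, neg_neg]

lemma associator_swap_outer (x y z : A) : associator x y z = -associator z y x := by
  rw [hA.associator_swap_left, hA.associator_cyclic z]

lemma associator_self_outer (x y : A) : associator x y x = 0 := by
  rw [hA.associator_swap_left, hA.associator_self_right, neg_zero]

lemma mul_mul_self_eq (x y : A) : x * (y * x) = x * y * x :=
  (sub_eq_zero.mp (hA.associator_self_outer x y)).symm

end IsAlternative

namespace IsCompositionNorm

variable {F : Type} [Field F] {C : Type} [NonAssocRing C] [Module F C]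
  [SMulCommClass F C C] [IsScalarTower F C C] {n : QuadraticForm F C} (hn : IsCompositionNorm n)
include hn

lemma isAlternative : IsAlternative C where
  associator_self_left x y := by
    have h := hn.ocConj_mul_mul_left x y
    rw [ocConj_mul_eq_smul_sub] at h
    rw [associator_apply, hn.mul_self_eq, sub_mul, smul_mul_assoc, smul_mul_assoc, one_mul]
    linear_combination (norm := abel1) h
  associator_self_right x y := by
    have h := hn.mul_mul_ocConj_right y x
    rw [mul_ocConj_eq_smul_sub] at h
    rw [associator_apply, hn.mul_self_eq, mul_sub, mul_smul_comm, mul_smul_comm, mul_one]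
    linear_combination (norm := abel1) -h

lemma polar_associator_one (x y z : C) : polar n (associator x y z) 1 = 0 := by
  rw [associator_apply, polar_sub_left, hn.polar_mul_one, hn.polar_mul_one,
    polar_mul_eq_polar_mul_ocConj hn.map_mul, hn.ocConj_mul, sub_self]

lemma polar_associator_self_left (x y z : C) : polar n x (associator x y z) = 0 := by
  have hl : polar n (x * y * z) x = n x * polar n z (ocConj F C n y) := by
    rw [polar_mul_eq_polar_ocConj_mul hn.map_mul, hn.ocConj_mul, hn.mul_ocConj_mul_right,
      polar_smul_right, smul_eq_mul]
  have hr : polar n (x * (y * z)) x = n x * polar n z (ocConj F C n y) := by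
    rw [polar_mul_eq_polar_ocConj_mul hn.map_mul, hn.ocConj_mul_self, polar_smul_right,
      hn.polar_mul_one, ← polar_ocConj_left, polar_comm n (ocConj F C n y), smul_eq_mul]
  rw [polar_comm, associator_apply, polar_sub_left, hl, hr, sub_self]

lemma mul_eq_ocConj_mul_of_polar_eq_zero {x a : C} (hx : polar n x a = 0)
    (ha : polar n a 1 = 0) : a * x = ocConj F C n x * a := by
  have h := hn.mul_add_mul_swap x a
  rw [hx, ha, zero_smul, zero_smul, add_zero, sub_zero] at h
  rw [ocConj_mul_eq_smul_sub]
  linear_combination (norm := abel1) h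

lemma associator_mul_self_left (x y z : C) :
    associator (x * x) y z = polar n x 1 • associator x y z := by
  simp only [associator_apply, hn.mul_self_eq x, sub_mul, smul_mul_assoc, one_mul, smul_sub]
  abel

lemma associator_self_mul_middle (x y z : C) :
    associator x (x * y) z = ocConj F C n x * associator x y z := by
  have h := associator_cocycle x x y z
  rw [hn.isAlternative.associator_self_left, hn.isAlternative.associator_self_left,
    hn.associator_mul_self_left, zero_mul, add_zero, ocConj_mul_eq_smul_sub] at *
  linear_combination (norm := abel1) h

lemma associator_mul_self_middle (x y z : C) :
    associator x (y * x) z = x * associator x y z := by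
  have hyx : y * x = polar n x 1 • y + polar n y 1 • x - polar n x y • (1 : C) - x * y := by
    linear_combination (norm := module) hn.mul_add_mul_swap x y
  have hxy := hn.associator_self_mul_middle x y z
  have hxx := hn.isAlternative.associator_self_left x z
  rw [ocConj_mul_eq_smul_sub] at hxy
  rw [hyx]
  simp only [associator_apply, sub_mul, mul_sub, add_mul, mul_add, smul_mul_assoc,
    mul_smul_comm, one_mul, mul_one] at hxy hxx ⊢
  linear_combination (norm := module) polar n y 1 • hxx - hxy

lemma associator_self_mul_right (x y z : C) :
    associator x y (x * z) = ocConj F C n x * associator x y z := by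
  have h := associator_cocycle x y x z
  rw [hn.isAlternative.associator_swap_left (x * y), hn.associator_self_mul_middle,
    hn.associator_mul_self_middle, hn.isAlternative.associator_swap_left y,
    hn.isAlternative.associator_self_outer, zero_mul, mul_neg] at h
  linear_combination (norm := abel1) -h

lemma associator_middle_mul_self (x y z : C) :
    associator z (y * x) x = associator z y x * ocConj F C n x := by
  have h := associator_cocycle z y x x
  rw [hn.isAlternative.associator_self_right, hn.isAlternative.associator_self_right,
    hn.associator_mul_self_right, mul_zero, mul_ocConj_eq_smul_sub] at *
  linear_combination (norm := abel1) h

lemma associator_left_mul_self (x y z : C) :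
    associator (z * x) y x = associator z y x * ocConj F C n x := by
  have h := associator_cocycle z x y x
  have hA := hn.isAlternative
  rw [hA.associator_self_outer, mul_zero, hA.associator_swap_outer z,
    hn.associator_self_mul_middle, hA.associator_cyclic z x, hn.associator_mul_self_middle,
    hA.associator_swap_right z x y, hA.associator_swap_outer x y z, ocConj_mul_eq_smul_sub,
    mul_neg, neg_mul] at h
  rw [mul_ocConj_eq_smul_sub]
  linear_combination (norm := module) -h

lemma associator_mul_eq_ocConj_mul_associator (x y z : C) :
    associator x y z * x = ocConj F C n x * associator x y z :=
  hn.mul_eq_ocConj_mul_of_polar_eq_zero (hn.polar_associator_self_left x y z)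
    (hn.polar_associator_one x y z)

lemma moufang_middle (x y z : C) : x * (y * z) * x = x * y * (z * x) := by
  have hAx := hn.associator_mul_eq_ocConj_mul_associator x y z
  have hxy : associator (x * y) z x = ocConj F C n x * associator x y z := by
    rw [hn.isAlternative.associator_cyclic, hn.isAlternative.associator_cyclic z,
      hn.associator_self_mul_middle]
  simp only [associator_apply, sub_mul, mul_sub] at hxy hAx
  linear_combination (norm := abel1) hxy - hAx

lemma moufang_middle_linear (x y z w : C) :
    x * (y * z) * w + w * (y * z) * x = x * y * (z * w) + w * y * (z * x) := by
  have h := hn.moufang_middle (x + w) y z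
  simp only [add_mul, mul_add] at h
  linear_combination (norm := abel1) h - hn.moufang_middle x y z - hn.moufang_middle w y z

lemma moufang_left (x y z : C) : x * y * x * z = x * (y * (x * z)) := by
  have hr := hn.associator_self_mul_right x y z
  have hl : associator (x * y) x z = -(ocConj F C n x * associator x y z) := by
    rw [hn.isAlternative.associator_swap_left, hn.associator_self_mul_middle]
  simp only [associator_apply] at hl hr
  linear_combination (norm := abel1) hl + hr

lemma moufang_right (x y z : C) : x * y * z * y = x * (y * (z * y)) := by
  have hm : associator x y (z * y) = associator x y z * ocConj F C n y := by
    rw [hn.isAlternative.associator_swap_right, hn.associator_middle_mul_self,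
      hn.isAlternative.associator_swap_right x z, neg_mul, neg_neg]
  have hl : associator (x * y) z y = -(associator x y z * ocConj F C n y) := by
    rw [hn.associator_left_mul_self, hn.isAlternative.associator_swap_right x z, neg_mul]
  simp only [associator_apply, sub_mul] at hm hl
  linear_combination (norm := abel1) hm + hl

lemma associator_mul_mul_left (u a c : C) :
    associator u (a * c) (u * a) = -(associator u a c * (u * a)) := by
  have hA := hn.isAlternative
  set B := associator u a c
  have hBa : associator a c u = B := by rw [hA.associator_cyclic, hA.associator_cyclic c]
  have hua : ocConj F C n u * B = B * u :=
    (hn.associator_mul_eq_ocConj_mul_associator u a c).symm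
  have haB : ocConj F C n a * B = B * a := by
    rw [← hBa]; exact (hn.associator_mul_eq_ocConj_mul_associator a c u).symm
  have hBua : associator (ocConj F C n u) B a = associator B u a := by
    rw [associator_ocConj_left, hA.associator_swap_left B]
  rw [hn.associator_self_mul_right, hA.associator_swap_outer, hn.associator_self_mul_middle,
    hBa, mul_neg, haB]
  simp only [associator_apply] at hBua
  linear_combination (norm := abel1) hBua - hua * a

lemma associator_mul_mul_right (u a c : C) :
    associator (a * c) (u * a) c = -(a * c * associator u a c) := by
  have hA := hn.isAlternative
  set B := associator u a c
  have hBa : associator a c u = B := by rw [hA.associator_cyclic, hA.associator_cyclic c]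
  have hBc : associator c u a = B := hA.associator_cyclic c u a
  have haB : a * B = B * ocConj F C n a := by
    rw [← hBa]
    exact hn.mul_eq_mul_ocConj_of_polar_eq_zero (hn.polar_associator_self_left a c u)
      (hn.polar_associator_one a c u)
  have hcB : c * B = B * ocConj F C n c := by
    rw [← hBc]
    exact hn.mul_eq_mul_ocConj_of_polar_eq_zero (hn.polar_associator_self_left c u a)
      (hn.polar_associator_one c u a)
  have haBc : associator a B (ocConj F C n c) = associator a c B := by
    rw [associator_ocConj_right, hA.associator_swap_right a c]
  rw [hn.associator_left_mul_self, hA.associator_swap_outer a, hn.associator_middle_mul_self,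
    hBc, neg_mul, ← haB]
  simp only [associator_apply] at haBc
  linear_combination (norm := abel1) -haBc + a * hcB

lemma moufang_middle_linear_left (x c u a : C) :
    x * (c * u) * a + u * (a * c * x) = x * c * (u * a) + u * a * c * x := by
  have h := hn.moufang_middle_linear x c u a
  have hs : associator (a * c) u x = -associator u (a * c) x :=
    hn.isAlternative.associator_swap_left _ _ _
  have hc : associator a c u * x = associator u a c * x := by
    rw [hn.isAlternative.associator_cyclic, hn.isAlternative.associator_cyclic c]
  simp only [associator_apply, sub_mul, neg_sub] at hs hc
  linear_combination (norm := abel1) h - hs + hc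

lemma moufang_middle_linear_right (a c u y : C) :
    a * (c * u * y) + y * (u * a) * c = a * c * u * y + y * u * (a * c) := by
  have h := hn.moufang_middle_linear y u a c
  have hs : associator a (c * u) y = -associator (c * u) a y :=
    hn.isAlternative.associator_swap_left _ _ _
  have hc : associator a c u * y = associator c u a * y := by
    rw [hn.isAlternative.associator_cyclic]
  simp only [associator_apply, sub_mul, neg_sub] at hs hc
  linear_combination (norm := abel1) h - hs - hc

end IsCompositionNorm

lemma Function.bijective_of_comp_eq_add {G α : Type*} [AddGroup G] {f : G → α → α}
    (hf : ∀ a b, f a ∘ f b = f (a + b)) (h0 : f 0 = id) (a : G) : Function.Bijective (f a) :=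
  Function.bijective_iff_has_inverse.mpr
    ⟨f (-a), congrFun (show f (-a) ∘ f a = id by rw [hf, neg_add_cancel, h0]),
      congrFun (show f a ∘ f (-a) = id by rw [hf, add_neg_cancel, h0])⟩

section BiCayley

variable {F : Type} [Field F] {C : Type} [NonAssocRing C] [Module F C] {n : QuadraticForm F C}

variable (n) in
def phiPlus (a : C) (x : C × C) : C × C := (x.1 - ocConj F C n x.2 * a, x.2)

variable (n) in
def phiMinus (a : C) (y : C × C) : C × C := (y.1, a * ocConj F C n y.1 + y.2)

lemma phiPlus_comp (a b : C) : phiPlus n a ∘ phiPlus n b = phiPlus n (a + b) := by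
  funext x
  simp only [Function.comp_apply, phiPlus, mul_add, Prod.mk.injEq, and_true]
  abel

lemma phiMinus_comp (a b : C) : phiMinus n a ∘ phiMinus n b = phiMinus n (a + b) := by
  funext y
  simp only [Function.comp_apply, phiMinus, add_mul, Prod.mk.injEq, true_and]
  abel

lemma phiPlus_zero : phiPlus n 0 = id := by
  funext x
  simp only [phiPlus, mul_zero, sub_zero, id]

lemma phiMinus_zero : phiMinus n 0 = id := by
  funext y
  simp only [phiMinus, zero_mul, zero_add, id]

lemma phiMinus_injective (h1 : n 1 = 1) : Function.Injective (phiMinus n) := fun a b h => by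
  simpa only [phiMinus, ocConj_one h1, mul_one, add_zero] using congrArg (fun f => (f (1, 0)).2) h

variable [SMulCommClass F C C] [IsScalarTower F C C]

lemma phiPlus_biQ (hn : IsCompositionNorm n) (a : C) (x y : C × C) :
    phiPlus n a (biQ F C n x y) = biQ F C n (phiPlus n a x) (phiMinus n a y) := by
  obtain ⟨x₁, x₂⟩ := x
  obtain ⟨y₁, y₂⟩ := y
  simp only [phiPlus, phiMinus, biQ, ocConj_add, ocConj_sub, hn.ocConj_mul,
    ocConj_ocConj hn.map_one, Prod.mk.injEq]
  set u := ocConj F C n x₂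
  set c := ocConj F C n y₁
  constructor
  · have hl : u * (y₂ * (u * a)) = u * (y₂ * u) * a := by
      rw [hn.isAlternative.mul_mul_self_eq, hn.moufang_left]
    have hm := hn.moufang_middle_linear_left x₁ c u a
    have hu := hn.associator_mul_mul_left u a c
    simp only [associator_apply, sub_mul] at hu
    simp only [sub_mul, mul_sub, mul_add, add_mul]
    linear_combination (norm := abel1) hl - hm - hu
  · have hm := hn.moufang_middle x₂ y₁ (ocConj F C n a)
    simp only [mul_add, add_mul, mul_sub]
    linear_combination (norm := abel1) -hm

lemma phiMinus_biQ (hn : IsCompositionNorm n) (a : C) (y x : C × C) :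
    phiMinus n a (biQ F C n y x) = biQ F C n (phiMinus n a y) (phiPlus n a x) := by
  obtain ⟨y₁, y₂⟩ := y
  obtain ⟨x₁, x₂⟩ := x
  simp only [phiPlus, phiMinus, biQ, ocConj_add, ocConj_sub, hn.ocConj_mul,
    ocConj_ocConj hn.map_one, Prod.mk.injEq]
  set u := ocConj F C n x₂
  set c := ocConj F C n y₁
  constructor
  · have hm := hn.moufang_middle y₁ (ocConj F C n a) x₂
    simp only [mul_sub, sub_mul, add_mul]
    linear_combination (norm := abel1) hm
  · have hr := hn.moufang_right a c x₁
    have hm := hn.moufang_middle_linear_right a c u y₂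
    have hc := hn.associator_mul_mul_right u a c
    have hf := hn.isAlternative.mul_mul_self_eq (a * c) u
    simp only [associator_apply, mul_sub] at hc
    simp only [mul_add, add_mul, mul_sub, sub_mul]
    linear_combination (norm := abel1) -hr + hm + hc + hf

end BiCayley

theorem stmt_10_general (F : Type) [Field F]
    (C : Type) [NonAssocRing C] [Module F C] [SMulCommClass F C C] [IsScalarTower F C C]
    (n : QuadraticForm F C)
    (hcomp : ∀ x y : C, n (x * y) = n x * n y)
    (hnd : ∀ x : C, (∀ y : C, QuadraticMap.polar n x y = 0) → x = 0) :
    ∀ φp φm : C → C × C → C × C,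
      (∀ (a : C) (x : C × C), φp a x = (x.1 - ocConj F C n x.2 * a, x.2)) →
      (∀ (a : C) (y : C × C), φm a y = (y.1, a * ocConj F C n y.1 + y.2)) →
      (∀ a : C, Function.Bijective (φp a) ∧ Function.Bijective (φm a)) ∧
      (∀ (a : C) (x y : C × C), φp a (biQ F C n x y) = biQ F C n (φp a x) (φm a y)) ∧
      (∀ (a : C) (y x : C × C), φm a (biQ F C n y x) = biQ F C n (φm a y) (φp a x)) ∧
      (∀ a b : C, φp a ∘ φp b = φp (a + b) ∧ φm a ∘ φm b = φm (a + b)) ∧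
      (∀ a b : C, φp a = φp b ∧ φm a = φm b → a = b) := by
  intro φp φm hφp hφm
  obtain rfl : φp = phiPlus n := funext₂ hφp
  obtain rfl : φm = phiMinus n := funext₂ hφm
  nontriviality C
  have hn := IsCompositionNorm.of_nontrivial hcomp hnd
  exact ⟨fun a => ⟨Function.bijective_of_comp_eq_add phiPlus_comp phiPlus_zero a,
      Function.bijective_of_comp_eq_add phiMinus_comp phiMinus_zero a⟩,
    phiPlus_biQ hn, phiMinus_biQ hn, fun a b => ⟨phiPlus_comp a b, phiMinus_comp a b⟩,
    fun _ _ h => phiMinus_injective hn.map_one h.2⟩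

/-- For each `a` in a Cayley algebra `C` (char ≠ 2), the pair of maps
`φ_a⁺(x₁,x₂) = (x₁ - x̄₂a, x₂)`, `φ_a⁻(y₁,y₂) = (y₁, aȳ₁ + y₂)` is an
automorphism of the bi-Cayley Jordan pair, and `φ_a ∘ φ_b = φ_{a+b}`, so that
`{φ_a : a ∈ C}` is an abelian subgroup of `Aut(V_B)` isomorphic to `(C,+)`. -/
theorem stmt_10 (F : Type) [Field F] (hchar : (2 : F) ≠ 0)
    (C : Type) [NonAssocRing C] [Module F C] [SMulCommClass F C C] [IsScalarTower F C C]
    (n : QuadraticForm F C)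
    (hcomp : ∀ x y : C, n (x * y) = n x * n y)
    (hnd : ∀ x : C, (∀ y : C, QuadraticMap.polar n x y = 0) → x = 0)
    (hdim : Module.finrank F C = 8) :
    ∀ φp φm : C → C × C → C × C,
      (∀ (a : C) (x : C × C), φp a x = (x.1 - ocConj F C n x.2 * a, x.2)) →
      (∀ (a : C) (y : C × C), φm a y = (y.1, a * ocConj F C n y.1 + y.2)) →
      (∀ a : C, Function.Bijective (φp a) ∧ Function.Bijective (φm a)) ∧
      (∀ (a : C) (x y : C × C), φp a (biQ F C n x y) = biQ F C n (φp a x) (φm a y)) ∧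
      (∀ (a : C) (y x : C × C), φm a (biQ F C n y x) = biQ F C n (φm a y) (φp a x)) ∧
      (∀ a b : C, φp a ∘ φp b = φp (a + b) ∧ φm a ∘ φm b = φm (a + b)) ∧
      (∀ a b : C, φp a = φp b ∧ φm a = φm b → a = b) :=
  stmt_10_general F C n hcomp hnd
end
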